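/- Let A be a diagonalizable derivation of the Heisenberg algebra 𝓗_n with positive eigenvalues α_1 < ⋯ < α_{k+1} and eigenspaces U_1, …, U_{k+1}, and fix a nonzero vector e ∈ U_{k+1}. For every i with 2i < k+1, writing m_i = dim U_i, one has dim U_{k+1−i} = m_i and there exist a basis e_1, …, e_{m_i} of U_i and a basis η_1, …, η_{m_i} of U_{k+1−i} such that [e_s, η_t] = δ_{st}·e for all 1 ≤ s, t ≤ m_i. -/

import Mathlib

open scoped BigOperators RealInnerProductSpace ENNReal
open Module Filter

noncomputable section

/-- The underlying space of the `n`-th Heisenberg group/algebra: `ℝ^{2n+1}`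
with a fixed inner product. -/
abbrev HV (n : ℕ) : Type := EuclideanSpace ℝ (Fin (2 * n + 1))

/-- `br` is a Heisenberg Lie bracket on `ℝ^{2n+1}`: with respect to some basis
`b`, the only nontrivial bracket relations are `[b_{2s}, b_{2s+1}] = b_{2n}` (0-indexed). -/
def IsHeisenbergBracket (n : ℕ) (br : HV n →ₗ[ℝ] HV n →ₗ[ℝ] HV n) : Prop :=
  ∃ b : Basis (Fin (2 * n + 1)) ℝ (HV n),
    ∀ i j : Fin (2 * n + 1),
      br (b i) (b j) =
        (if (i : ℕ) % 2 = 0 ∧ (j : ℕ) = (i : ℕ) + 1 ∧ (i : ℕ) < 2 * n then (1 : ℝ)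
         else if (j : ℕ) % 2 = 0 ∧ (i : ℕ) = (j : ℕ) + 1 ∧ (j : ℕ) < 2 * n then (-1 : ℝ)
         else 0) • b ⟨2 * n, by omega⟩

/-- `A` is a derivation of the Lie algebra `(ℝ^{2n+1}, br)`. -/
def IsDerivation {n : ℕ} (br : HV n →ₗ[ℝ] HV n →ₗ[ℝ] HV n)
    (A : HV n →ₗ[ℝ] HV n) : Prop :=
  ∀ x y, A (br x y) = br (A x) y + br x (A y)

/-- The group product `x * y = x + y + (1/2)[x,y]` (BCH formula). -/
def hMul {n : ℕ} (br : HV n →ₗ[ℝ] HV n →ₗ[ℝ] HV n) (x y : HV n) : HV n :=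
  x + y + (2⁻¹ : ℝ) • br x y

/-- The left coset `g * S`. -/
def leftCoset {n : ℕ} (br : HV n →ₗ[ℝ] HV n →ₗ[ℝ] HV n) (g : HV n)
    (S : Set (HV n)) : Set (HV n) :=
  hMul br g '' S

/-- `‖x‖_A = Σ_i |x_i|^{1/α_i}`, where `x_i` is the component of `x` in the
eigenspace `U i` (computed as the orthogonal projection; the eigenspaces are
assumed mutually orthogonal with sum everything). -/
def normA {n k : ℕ} (α : Fin (k + 1) → ℝ) (U : Fin (k + 1) → Submodule ℝ (HV n))
    (x : HV n) : ℝ :=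
  ∑ i, ‖(Submodule.orthogonalProjectionOnto (U i) x : HV n)‖ ^ (α i)⁻¹

/-- The parabolic visual quasimetric `d_A(p,q) = ‖(-p) * q‖_A`. -/
def qd {n k : ℕ} (br : HV n →ₗ[ℝ] HV n →ₗ[ℝ] HV n) (α : Fin (k + 1) → ℝ)
    (U : Fin (k + 1) → Submodule ℝ (HV n)) (p q : HV n) : ℝ :=
  normA α U (hMul br (-p) q)

/-- `η` is a homeomorphism of `[0,∞)` onto itself. -/
def IsHomeoOfNonneg (η : ℝ → ℝ) : Prop :=
  η 0 = 0 ∧ StrictMonoOn η (Set.Ici 0) ∧ ContinuousOn η (Set.Ici 0) ∧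
    ∀ s : ℝ, 0 ≤ s → ∃ t : ℝ, 0 ≤ t ∧ η t = s

/-- `F` is an `η`-quasisymmetry from `(X, d1)` to `(X, d2)`. -/
def IsQS {X : Type*} (d1 d2 : X → X → ℝ) (η : ℝ → ℝ) (F : X → X) : Prop :=
  Function.Bijective F ∧
    ∀ x y z : X, x ≠ y → y ≠ z → x ≠ z →
      d2 (F x) (F y) / d2 (F x) (F z) ≤ η (d1 x y / d1 x z)

/-- `L_F(x,r) = sup { d2(F x, F x') : d1(x,x') ≤ r }`. -/
def LFr {X : Type*} (d1 d2 : X → X → ℝ) (F : X → X) (x : X) (r : ℝ) : ℝ≥0∞ :=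
  ⨆ (x' : X) (_ : d1 x x' ≤ r), ENNReal.ofReal (d2 (F x) (F x'))

/-- `l_F(x,r) = inf { d2(F x, F x') : d1(x,x') ≥ r }`. -/
def lFr {X : Type*} (d1 d2 : X → X → ℝ) (F : X → X) (x : X) (r : ℝ) : ℝ≥0∞ :=
  ⨅ (x' : X) (_ : r ≤ d1 x x'), ENNReal.ofReal (d2 (F x) (F x'))

/-- `L_F(x) = limsup_{r→0⁺} L_F(x,r)/r`. -/
def LF {X : Type*} (d1 d2 : X → X → ℝ) (F : X → X) (x : X) : ℝ≥0∞ :=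
  Filter.limsup (fun r : ℝ => LFr d1 d2 F x r / ENNReal.ofReal r) (nhdsWithin 0 (Set.Ioi 0))

/-- `l_F(x) = liminf_{r→0⁺} l_F(x,r)/r`. -/
def lF {X : Type*} (d1 d2 : X → X → ℝ) (F : X → X) (x : X) : ℝ≥0∞ :=
  Filter.liminf (fun r : ℝ => lFr d1 d2 F x r / ENNReal.ofReal r) (nhdsWithin 0 (Set.Ioi 0))


/-!
The Heisenberg bracket takes values in the centre `ker br = ℝ ∙ z`, a line. A derivation `A`
preserves the centre, so the centre is an eigenline of `A`. If `x ∈ U_s` is not central, it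
brackets nontrivially with some `y ∈ U_t`, and then `[x, y]` is central with `A`-eigenvalue
`α_s + α_t`. For `x = e` this eigenvalue would exceed every `α`, so `e` is central and the centre
is `ℝ ∙ e`, with eigenvalue `α_{k+1}`. Hence `α_s ↦ α_{k+1} - α_s` maps `α_1 < ⋯ < α_k` into
itself reversing the order, so it is `α_s ↦ α_{k+1-s}`. Finally `[x, y] = ω(x, y) e` restricts
to a pairing `U_i × U_{k+1-i} → ℝ` that is nondegenerate on both sides, and dual bases for it
are the required bases.
-/

def heisCoeff (n i j : ℕ) : ℝ :=
  if i % 2 = 0 ∧ j = i + 1 ∧ i < 2 * n then 1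
  else if j % 2 = 0 ∧ i = j + 1 ∧ j < 2 * n then -1 else 0

theorem heisCoeff_swap (n i j : ℕ) : heisCoeff n j i = -heisCoeff n i j := by
  unfold heisCoeff
  split_ifs <;> first | omega | norm_num

theorem heisCoeff_two_mul_left (n j : ℕ) : heisCoeff n (2 * n) j = 0 := by
  unfold heisCoeff
  split_ifs <;> first | rfl | omega

def heisPartner (s : ℕ) : ℕ := if s % 2 = 0 then s + 1 else s - 1

theorem heisPartner_lt {n s : ℕ} (hs : s < 2 * n) : heisPartner s < 2 * n := by
  unfold heisPartner
  split_ifs <;> omega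

theorem heisCoeff_heisPartner_ne_zero_iff {n s : ℕ} (hs : s < 2 * n) (t : ℕ) :
    heisCoeff n t (heisPartner s) ≠ 0 ↔ t = s := by
  unfold heisCoeff heisPartner
  split_ifs <;> (try norm_num) <;> omega

/-- `IsHeisenbergBracket n br` unfolds to `∃ b, IsHeisenbergBasis br b`. -/
def IsHeisenbergBasis {n : ℕ} (br : HV n →ₗ[ℝ] HV n →ₗ[ℝ] HV n)
    (b : Basis (Fin (2 * n + 1)) ℝ (HV n)) : Prop :=
  ∀ i j, br (b i) (b j) = heisCoeff n i j • b (Fin.last (2 * n))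

namespace IsHeisenbergBasis

variable {n : ℕ} {br : HV n →ₗ[ℝ] HV n →ₗ[ℝ] HV n} {b : Basis (Fin (2 * n + 1)) ℝ (HV n)}

theorem flip_eq_neg (hb : IsHeisenbergBasis br b) : br.flip = -br :=
  b.ext fun i => b.ext fun j => by
    rw [LinearMap.flip_apply, LinearMap.neg_apply, LinearMap.neg_apply, hb, hb, heisCoeff_swap,
      neg_smul]

theorem apply_mem_span (hb : IsHeisenbergBasis br b) (x y : HV n) :
    br x y ∈ ℝ ∙ b (Fin.last (2 * n)) := by
  rw [← LinearMap.sum_repr_mul_repr_mul b b x y]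
  refine Submodule.finsuppSum_mem _ _ _ _ fun i _ => Submodule.finsuppSum_mem _ _ _ _ fun j _ => ?_
  rw [hb]
  exact Submodule.smul_mem _ _ <| Submodule.smul_mem _ _ <|
    Submodule.smul_mem _ _ <| Submodule.mem_span_singleton_self _

theorem repr_eq_zero_of_apply_eq_zero (hb : IsHeisenbergBasis br b) {x : HV n} (hx : br x = 0)
    {s : Fin (2 * n + 1)} (hs : (s : ℕ) < 2 * n) : b.repr x s = 0 := by
  let p : Fin (2 * n + 1) := ⟨heisPartner s, by have := heisPartner_lt hs; omega⟩
  have hxp : br x (b p) = (∑ t, b.repr x t * heisCoeff n t p) • b (Fin.last (2 * n)) := by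
    conv_lhs => rw [← b.sum_repr x]
    simp only [map_sum, map_smul, LinearMap.sum_apply, LinearMap.smul_apply, hb _ p, smul_smul,
      Finset.sum_smul]
  rw [hx, LinearMap.zero_apply, eq_comm, smul_eq_zero, Finset.sum_eq_single s] at hxp
  · exact (mul_eq_zero.mp (hxp.resolve_right (b.ne_zero _))).resolve_right
      ((heisCoeff_heisPartner_ne_zero_iff hs s).mpr rfl)
  · intro t _ hts
    have hcoeff : heisCoeff n t p = 0 :=
      not_ne_iff.mp <| mt (heisCoeff_heisPartner_ne_zero_iff hs t).mp (Fin.val_ne_of_ne hts)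
    rw [hcoeff, mul_zero]
  · simp

theorem ker_eq_span (hb : IsHeisenbergBasis br b) :
    LinearMap.ker br = ℝ ∙ b (Fin.last (2 * n)) := by
  refine le_antisymm (fun x hx => ?_) ((Submodule.span_singleton_le_iff_mem _ _).mpr ?_)
  · have hcoord (s : Fin (2 * n + 1)) (hs : s ≠ Fin.last (2 * n)) : b.repr x s = 0 :=
      hb.repr_eq_zero_of_apply_eq_zero hx (Fin.val_lt_last hs)
    rw [← b.sum_repr x, Finset.sum_eq_single (Fin.last (2 * n))
      (fun s _ hs => by rw [hcoord s hs, zero_smul]) (by simp)]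
    exact Submodule.smul_mem _ _ (Submodule.mem_span_singleton_self _)
  · exact b.ext fun j => by rw [hb, Fin.val_last, heisCoeff_two_mul_left, zero_smul]; rfl

end IsHeisenbergBasis

namespace IsHeisenbergBracket

variable {n : ℕ} {br : HV n →ₗ[ℝ] HV n →ₗ[ℝ] HV n}

theorem apply_swap (hbr : IsHeisenbergBracket n br) (x y : HV n) : br y x = -br x y :=
  let ⟨_, hb⟩ := hbr
  LinearMap.congr_fun₂ (IsHeisenbergBasis.flip_eq_neg hb) x y

theorem exists_center (hbr : IsHeisenbergBracket n br) :
    ∃ z : HV n, z ≠ 0 ∧ (∀ x y, br x y ∈ ℝ ∙ z) ∧ LinearMap.ker br = ℝ ∙ z :=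
  let ⟨b, hb⟩ := hbr
  ⟨_, b.ne_zero _, IsHeisenbergBasis.apply_mem_span hb, IsHeisenbergBasis.ker_eq_span hb⟩

end IsHeisenbergBracket

theorem Fin.add_rev_eq_of_forall_exists_add_eq {G : Type*} [AddCommMonoid G] [PartialOrder G]
    [IsOrderedCancelAddMonoid G] {m : ℕ} {β : Fin m → G} (hβ : StrictMono β) {c : G}
    (h : ∀ s, ∃ t, β s + β t = c) (s : Fin m) : β s + β s.rev = c := by
  choose τ hτ using h
  have hτ_anti : StrictAnti τ := fun s s' hss' => hβ.lt_iff_lt.mp <|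
    lt_of_add_lt_add_left (a := β s') <| by
      rw [hτ s', ← hτ s]
      exact add_lt_add_left (hβ hss') _
  have hτ_rev : τ s = s.rev := Fin.rev_eq_iff.mp (Fin.rev_strictAnti.comp hτ_anti).apply_eq
  rw [← hτ_rev, hτ]

theorem Submodule.linearIndependent_coe_basis {K V ι : Type*} [Ring K] [AddCommGroup V]
    [Module K V] {W : Submodule K V} (b : Basis ι K W) :
    LinearIndependent K fun i => (b i : V) :=
  b.linearIndependent.map' W.subtype W.ker_subtype

theorem Submodule.span_range_coe_basis {K V ι : Type*} [Semiring K] [AddCommMonoid V] [Module K V]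
    {W : Submodule K V} (b : Basis ι K W) : span K (Set.range fun i => (b i : V)) = W := by
  rw [Set.range_comp' Subtype.val b, ← W.coe_subtype, ← Submodule.map_span, b.span_eq,
    Submodule.map_subtype_top]

theorem LinearMap.exists_basis_apply_basis_eq_ite {K M N : Type*} [Field K] [AddCommGroup M]
    [Module K M] [AddCommGroup N] [Module K N] [FiniteDimensional K M] {B : M →ₗ[K] N →ₗ[K] K}
    (hl : Function.Injective B) (hr : Function.Injective B.flip) :
    finrank K N = finrank K M ∧ ∃ (v : Basis (Fin (finrank K M)) K M)
      (w : Basis (Fin (finrank K M)) K N), ∀ s t, B (v s) (w t) = if s = t then 1 else 0 := by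
  have := IsPerfPair.of_injective hl hr
  have := FiniteDimensional.of_injective B.flip hr
  have hdim : finrank K N = finrank K M := (finrank_of_isPerfPair B).symm
  let w := (finBasis K N).reindex (finCongr hdim)
  refine ⟨hdim, w.dualBasis.map B.toPerfPair.symm, w, fun s t => ?_⟩
  rw [Basis.map_apply, apply_symm_toPerfPair_self, Basis.dualBasis_apply_self]
  exact if_congr eq_comm rfl rfl

theorem LinearMap.exists_eq_smul_of_mem_span_singleton {K V M N : Type*} [Field K]
    [AddCommGroup V] [Module K V] [AddCommGroup M] [Module K M] [AddCommGroup N] [Module K N]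
    {br : M →ₗ[K] N →ₗ[K] V} {e : V} (hbr : ∀ x y, br x y ∈ K ∙ e) (he : e ≠ 0) :
    ∃ ω : M →ₗ[K] N →ₗ[K] K, ∀ x y, br x y = ω x y • e := by
  have hinj : Function.Injective (toSpanSingleton K V e) := fun _ _ h => smul_left_injective K he h
  refine ⟨br.codRestrict₂ _ hinj fun x y => ?_,
    fun x y => by rw [← toSpanSingleton_apply, codRestrict₂_apply]⟩
  rw [← span_singleton_eq_range]
  exact hbr x y

section Eigenspace

open Module.End

variable {K V ι : Type*} [Field K] [AddCommGroup V] [Module K V]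

theorem Module.End.eq_of_mem_eigenspace_of_ne_zero {f : End K V} {a c : K} {v : V}
    (ha : v ∈ f.eigenspace a) (hc : v ∈ f.eigenspace c) (hv : v ≠ 0) : a = c :=
  smul_left_injective K hv <| (mem_eigenspace_iff.mp ha).symm.trans (mem_eigenspace_iff.mp hc)

theorem Module.End.exists_eq_of_eigenspace_ne_bot {f : End K V} {α : ι → K}
    (hspan : ⨆ i, f.eigenspace (α i) = ⊤) {μ : K} (hμ : f.eigenspace μ ≠ ⊥) : ∃ i, α i = μ := by
  by_contra! h
  refine hμ (disjoint_top.mp ?_)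
  rw [← hspan]
  exact (f.eigenspaces_iSupIndep μ).mono_right
    (iSup_le fun i => le_iSup₂_of_le (α i) (h i) le_rfl)

theorem Submodule.exists_mem_apply_ne_zero_of_iSup_eq_top {W : Type*} [AddCommGroup W]
    [Module K W] {U : ι → Submodule K V} (hspan : ⨆ i, U i = ⊤) {g : V →ₗ[K] W} (hg : g ≠ 0) :
    ∃ i, ∃ y ∈ U i, g y ≠ 0 := by
  by_contra! h
  exact hg <| LinearMap.ker_eq_top.mp <| top_le_iff.mp <| hspan ▸ iSup_le fun i y hy => h i y hy

namespace LinearMap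

variable {br : V →ₗ[K] V →ₗ[K] V} {A : V →ₗ[K] V}

theorem apply_mem_eigenspace_add_of_derivation
    (hA : ∀ x y, A (br x y) = br (A x) y + br x (A y)) {a c : K} {x y : V}
    (hx : x ∈ eigenspace A a) (hy : y ∈ eigenspace A c) : br x y ∈ eigenspace A (a + c) := by
  rw [mem_eigenspace_iff] at hx hy ⊢
  rw [hA, hx, hy, map_smul, smul_apply, map_smul, add_smul]

theorem map_mem_ker_of_derivation (hA : ∀ x y, A (br x y) = br (A x) y + br x (A y)) {x : V}
    (hx : x ∈ ker br) : A x ∈ ker br := by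
  rw [mem_ker] at hx ⊢
  ext y
  simpa [hx] using (hA x y).symm

theorem exists_add_eq_of_notMem_ker (hA : ∀ x y, A (br x y) = br (A x) y + br x (A y))
    {α : ι → K} (hspan : ⨆ i, eigenspace A (α i) = ⊤) {ν : K}
    (hC : ∀ x y, br x y ∈ eigenspace A ν) {a : K} {x : V} (hx : x ∈ eigenspace A a)
    (hxC : x ∉ ker br) : ∃ t, ∃ y ∈ eigenspace A (α t), br x y ≠ 0 ∧ a + α t = ν := by
  obtain ⟨t, y, hy, hxy⟩ := Submodule.exists_mem_apply_ne_zero_of_iSup_eq_top hspan hxC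
  exact ⟨t, y, hy, hxy,
    eq_of_mem_eigenspace_of_ne_zero (apply_mem_eigenspace_add_of_derivation hA hx hy) (hC x y) hxy⟩

theorem eq_zero_of_forall_apply_eq_zero (hA : ∀ x y, A (br x y) = br (A x) y + br x (A y))
    {α : ι → K} (hspan : ⨆ i, eigenspace A (α i) = ⊤) (hC : ∀ x y, br x y ∈ ker br)
    {ν : K} (hker : ker br ≤ eigenspace A ν) {a c : K} (hac : a + c = ν) (ha : a ≠ ν)
    {x : V} (hx : x ∈ eigenspace A a) (h0 : ∀ y ∈ eigenspace A c, br x y = 0) : x = 0 := by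
  by_contra hx0
  obtain ⟨t, y, hy, hxy, hsum⟩ := exists_add_eq_of_notMem_ker hA hspan (fun x y => hker (hC x y))
    hx fun hxC => ha (eq_of_mem_eigenspace_of_ne_zero hx (hker hxC) hx0)
  rw [add_left_cancel (hsum.trans hac.symm)] at hy
  exact hxy (h0 y hy)

theorem exists_basis_apply_basis_eq_ite_smul [FiniteDimensional K V]
    (hA : ∀ x y, A (br x y) = br (A x) y + br x (A y)) {α : ι → K}
    (hspan : ⨆ i, eigenspace A (α i) = ⊤) (hswap : ∀ x y, br y x = -br x y)
    (hC : ∀ x y, br x y ∈ ker br) {e : V} (hkere : ker br = K ∙ e) (he0 : e ≠ 0) {ν : K}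
    (he : e ∈ eigenspace A ν) {a c : K} (hac : a + c = ν) (ha : a ≠ ν) (hc : c ≠ ν) :
    finrank K (eigenspace A c) = finrank K (eigenspace A a) ∧
      ∃ (v : Basis (Fin (finrank K (eigenspace A a))) K (eigenspace A a))
        (w : Basis (Fin (finrank K (eigenspace A a))) K (eigenspace A c)),
        ∀ s t, br (v s) (w t) = (if s = t then (1 : K) else 0) • e := by
  have hker : ker br ≤ eigenspace A ν := hkere ▸ (Submodule.span_singleton_le_iff_mem _ _).mpr he
  obtain ⟨ω, hω⟩ := exists_eq_smul_of_mem_span_singleton (hkere ▸ hC) he0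
  let B := ω.compl₁₂ (eigenspace A a).subtype (eigenspace A c).subtype
  have hl : Function.Injective B := (injective_iff_map_eq_zero B).mpr fun x hx => Subtype.ext <|
    eq_zero_of_forall_apply_eq_zero hA hspan hC hker hac ha x.2 fun y hy => by
      rw [hω, show ω x y = 0 from LinearMap.congr_fun hx ⟨y, hy⟩, zero_smul]
  have hr : Function.Injective B.flip := (injective_iff_map_eq_zero _).mpr fun y hy =>
    Subtype.ext <| eq_zero_of_forall_apply_eq_zero hA hspan hC hker ((add_comm c a).trans hac)
      hc y.2 fun x hx => by
        rw [hswap, hω, show ω x y = 0 from LinearMap.congr_fun hy ⟨x, hx⟩, zero_smul, neg_zero]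
  obtain ⟨hdim, v, w, hvw⟩ := exists_basis_apply_basis_eq_ite hl hr
  exact ⟨hdim, v, w, fun s t => by rw [hω, ← hvw s t]; rfl⟩

variable [LinearOrder K] [IsStrictOrderedRing K]

theorem mem_ker_of_mem_eigenspace_of_le (hA : ∀ x y, A (br x y) = br (A x) y + br x (A y))
    {α : ι → K} (hspan : ⨆ i, eigenspace A (α i) = ⊤) (hpos : ∀ i, 0 < α i) {ν : K}
    (hC : ∀ x y, br x y ∈ eigenspace A ν) {a : K} (hνa : ν ≤ a) {x : V}
    (hx : x ∈ eigenspace A a) : x ∈ ker br := by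
  by_contra hxC
  obtain ⟨t, -, -, -, hsum⟩ := exists_add_eq_of_notMem_ker hA hspan hC hx hxC
  linarith [hpos t]

theorem ker_eq_span_of_mem_eigenspace_of_forall_le
    (hA : ∀ x y, A (br x y) = br (A x) y + br x (A y)) {α : ι → K}
    (hspan : ⨆ i, eigenspace A (α i) = ⊤) (hpos : ∀ i, 0 < α i) {z : V} (hz : z ≠ 0)
    (hbr : ∀ x y, br x y ∈ K ∙ z) (hker : ker br = K ∙ z) {a : K} (hαa : ∀ i, α i ≤ a)
    {e : V} (he : e ∈ eigenspace A a) (he0 : e ≠ 0) : ker br = K ∙ e := by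
  have hz_ker : z ∈ ker br := hker ▸ Submodule.mem_span_singleton_self z
  obtain ⟨μ, hμ⟩ := Submodule.mem_span_singleton.mp (hker ▸ map_mem_ker_of_derivation hA hz_ker)
  have hz_eig : z ∈ eigenspace A μ := mem_eigenspace_iff.mpr hμ.symm
  obtain ⟨i, rfl⟩ :=
    exists_eq_of_eigenspace_ne_bot hspan ((Submodule.ne_bot_iff _).mpr ⟨z, hz_eig, hz⟩)
  have hC (x y : V) : br x y ∈ eigenspace A (α i) :=
    (Submodule.span_singleton_le_iff_mem _ _).mpr hz_eig (hbr x y)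
  obtain ⟨c, rfl⟩ := Submodule.mem_span_singleton.mp <|
    hker ▸ mem_ker_of_mem_eigenspace_of_le hA hspan hpos hC (hαa i) he
  rw [hker, Submodule.span_singleton_smul_eq (IsUnit.mk0 c (left_ne_zero_of_smul he0))]

theorem add_eq_last_of_add_add_two_eq (hA : ∀ x y, A (br x y) = br (A x) y + br x (A y))
    {m : ℕ} {α : Fin (m + 1) → K} (hspan : ⨆ i, eigenspace A (α i) = ⊤) (hα : StrictMono α)
    (hpos : ∀ i, 0 < α i) (hne : ∀ i, eigenspace A (α i) ≠ ⊥) (hC : ∀ x y, br x y ∈ ker br)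
    (hker : ker br ≤ eigenspace A (α (Fin.last m)))
    {i j : Fin (m + 1)} (hij : (i : ℕ) + j + 2 = m + 1) : α i + α j = α (Fin.last m) := by
  have hpartner (s : Fin m) : ∃ t : Fin m, α s.castSucc + α t.castSucc = α (Fin.last m) := by
    obtain ⟨x, hx, hx0⟩ := (Submodule.ne_bot_iff _).mp (hne s.castSucc)
    have hs : α s.castSucc ≠ α (Fin.last m) := hα.injective.ne (Fin.castSucc_lt_last s).ne
    obtain ⟨t, -, -, -, hsum⟩ := exists_add_eq_of_notMem_ker hA hspan (fun x y => hker (hC x y))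
      hx fun hxC => hs (eq_of_mem_eigenspace_of_ne_zero hx (hker hxC) hx0)
    have ht : t ≠ Fin.last m := by rintro rfl; linarith [hpos s.castSucc]
    exact ⟨t.castPred ht, by rwa [Fin.castSucc_castPred]⟩
  have := Fin.add_rev_eq_of_forall_exists_add_eq (hα.comp Fin.strictMono_castSucc) hpartner
    ⟨i, by omega⟩
  convert this using 2 <;> refine congrArg α (Fin.ext ?_) <;> simp [Fin.val_rev]
  omega

end LinearMap

end Eigenspace

theorem stmt4_general
    (n k : ℕ)
    (br : HV n →ₗ[ℝ] HV n →ₗ[ℝ] HV n) (hbr : IsHeisenbergBracket n br)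
    (A : HV n →ₗ[ℝ] HV n) (hA : IsDerivation br A)
    (α : Fin (k + 1) → ℝ) (hαmono : StrictMono α) (hαpos : ∀ i, 0 < α i)
    (U : Fin (k + 1) → Submodule ℝ (HV n))
    (hU : ∀ i, U i = Module.End.eigenspace A (α i))
    (hUne : ∀ i, U i ≠ ⊥) (hUspan : (⨆ i, U i) = ⊤)
    (e : HV n) (he : e ∈ U (Fin.last k)) (hene : e ≠ 0) :
    ∀ i j : Fin (k + 1), (i : ℕ) + (j : ℕ) + 2 = k + 1 → 2 * ((i : ℕ) + 1) < k + 1 →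
      Module.finrank ℝ (U j) = Module.finrank ℝ (U i) ∧
      ∃ v w : Fin (Module.finrank ℝ (U i)) → HV n,
        (∀ s, v s ∈ U i) ∧ (∀ s, w s ∈ U j) ∧
        LinearIndependent ℝ v ∧ Submodule.span ℝ (Set.range v) = U i ∧
        LinearIndependent ℝ w ∧ Submodule.span ℝ (Set.range w) = U j ∧
        ∀ s t, br (v s) (w t) = (if s = t then (1 : ℝ) else 0) • e := by
  intro i j hij _
  obtain rfl : U = fun i => End.eigenspace A (α i) := funext hU
  obtain ⟨z, hz, hbrz, hkerz⟩ := hbr.exists_center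
  have hC (x y : HV n) : br x y ∈ LinearMap.ker br := hkerz ▸ hbrz x y
  have hkere : LinearMap.ker br = ℝ ∙ e := LinearMap.ker_eq_span_of_mem_eigenspace_of_forall_le hA
    hUspan hαpos hz hbrz hkerz (fun i => hαmono.monotone (Fin.le_last i)) he hene
  have hker : LinearMap.ker br ≤ End.eigenspace A (α (Fin.last k)) :=
    hkere ▸ (Submodule.span_singleton_le_iff_mem _ _).mpr he
  have hαij := LinearMap.add_eq_last_of_add_add_two_eq hA hUspan hαmono hαpos hUne hC hker hij
  have hi : α i ≠ α (Fin.last k) := hαmono.injective.ne (Fin.ne_of_val_ne (by simp; omega))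
  have hj : α j ≠ α (Fin.last k) := hαmono.injective.ne (Fin.ne_of_val_ne (by simp; omega))
  obtain ⟨hdim, v, w, hvw⟩ := LinearMap.exists_basis_apply_basis_eq_ite_smul hA hUspan
    hbr.apply_swap hC hkere hene he hαij hi hj
  exact ⟨hdim, fun s => v s, fun t => w t, fun s => (v s).2, fun t => (w t).2,
    Submodule.linearIndependent_coe_basis v, Submodule.span_range_coe_basis v,
    Submodule.linearIndependent_coe_basis w, Submodule.span_range_coe_basis w, hvw⟩

theorem stmt4
    (n k : ℕ) (hn : 1 ≤ n) (hk : 1 ≤ k)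
    (br : HV n →ₗ[ℝ] HV n →ₗ[ℝ] HV n) (hbr : IsHeisenbergBracket n br)
    (A : HV n →ₗ[ℝ] HV n) (hA : IsDerivation br A)
    (α : Fin (k + 1) → ℝ) (hαmono : StrictMono α) (hαpos : ∀ i, 0 < α i)
    (U : Fin (k + 1) → Submodule ℝ (HV n))
    (hU : ∀ i, U i = Module.End.eigenspace A (α i))
    (hUne : ∀ i, U i ≠ ⊥) (hUspan : (⨆ i, U i) = ⊤)
    (e : HV n) (he : e ∈ U (Fin.last k)) (hene : e ≠ 0) :
    ∀ i j : Fin (k + 1), (i : ℕ) + (j : ℕ) + 2 = k + 1 → 2 * ((i : ℕ) + 1) < k + 1 →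
      Module.finrank ℝ (U j) = Module.finrank ℝ (U i) ∧
      ∃ v w : Fin (Module.finrank ℝ (U i)) → HV n,
        (∀ s, v s ∈ U i) ∧ (∀ s, w s ∈ U j) ∧
        LinearIndependent ℝ v ∧ Submodule.span ℝ (Set.range v) = U i ∧
        LinearIndependent ℝ w ∧ Submodule.span ℝ (Set.range w) = U j ∧
        ∀ s t, br (v s) (w t) = (if s = t then (1 : ℝ) else 0) • e :=
  stmt4_general n k br hbr A hA α hαmono hαpos U hU hUne hUspan e he hene
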